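/- The space ℂ[t,t⁻¹] ⊕ ℂ[t,t⁻¹]‾ modulo the span of the constant 1 in the first summand carries well-defined operators L_m·tⁿ = -n t^{m+n}, L_m·(t̄ᵏ) = -(k + m/2) t̄^{m+k}, H_m·t̄ᵏ = t̄^{m+k}, H_m·tⁿ = 0, G⁺_m·tⁿ = -2n t̄^{m+n}, G⁻_m·t̄ᵏ = t^{m+k}, G⁺_m·t̄ᵏ = G⁻_m·tⁿ = 0 (indices n ∈ ℤ\{0}, k ∈ ℤ), and these satisfy the centerless N=2 relation [L_m, L_n] = (m - n) L_{m+n} as operators on this quotient. -/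

import Mathlib

/-- The operator on `ℂ[t,t⁻¹]` sending the basis vector `tⁿ ↦ c n · t^{m+n}`. -/
noncomputable def wop (c : ℤ → ℂ) (m : ℤ) : (ℤ →₀ ℂ) →ₗ[ℂ] (ℤ →₀ ℂ) :=
  Finsupp.lsum ℂ fun n => c n • Finsupp.lsingle (m + n)

/-- The space `ℂ[t,t⁻¹] ⊕ ℂ[t,t⁻¹]‾`. -/
abbrev VV : Type := (ℤ →₀ ℂ) × (ℤ →₀ ℂ)

/-- `L_m : tⁿ ↦ -n t^{m+n}`, `t̄ᵏ ↦ -(k + m/2) t̄^{m+k}`. -/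
noncomputable def oL (m : ℤ) : VV →ₗ[ℂ] VV :=
  (wop (fun n => -(n : ℂ)) m).prodMap (wop (fun k => -((k : ℂ) + (m : ℂ) / 2)) m)

/-- `H_m : tⁿ ↦ 0`, `t̄ᵏ ↦ t̄^{m+k}`. -/
noncomputable def oH (m : ℤ) : VV →ₗ[ℂ] VV :=
  (0 : (ℤ →₀ ℂ) →ₗ[ℂ] (ℤ →₀ ℂ)).prodMap (wop (fun _ => 1) m)

/-- `G⁺_m : tⁿ ↦ -2n t̄^{m+n}`, `t̄ᵏ ↦ 0`. -/
noncomputable def oGp (m : ℤ) : VV →ₗ[ℂ] VV :=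
  LinearMap.prod 0 ((wop (fun n => -2 * (n : ℂ)) m).comp (LinearMap.fst ℂ _ _))

/-- `G⁻_m : t̄ᵏ ↦ t^{m+k}`, `tⁿ ↦ 0`. -/
noncomputable def oGm (m : ℤ) : VV →ₗ[ℂ] VV :=
  LinearMap.prod ((wop (fun _ => 1) m).comp (LinearMap.snd ℂ _ _)) 0

/-- The line `ℂ·1` in the first summand. -/
noncomputable def Kone : Submodule ℂ VV :=
  Submodule.span ℂ {((Finsupp.single (0 : ℤ) (1 : ℂ)), (0 : ℤ →₀ ℂ))}

/-!
Each operator is built from shift operators `tⁿ ↦ c(n) t^{m+n}`, which compose by multiplying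
coefficients, so the Witt relation already holds on `ℂ[t,t⁻¹] ⊕ ℂ[t,t⁻¹]‾` as an identity between
coefficient functions. Each operator kills the generator `(1, 0)` of `ℂ·1`: either it vanishes on
the first summand, or its coefficient at `n = 0` is `0`.
-/

theorem LinearMap.prodMap_sub {R M M₂ M₃ M₄ : Type*} [Semiring R] [AddCommMonoid M]
    [AddCommMonoid M₂] [AddCommGroup M₃] [AddCommGroup M₄] [Module R M] [Module R M₂]
    [Module R M₃] [Module R M₄] (f₁ f₂ : M →ₗ[R] M₃) (g₁ g₂ : M₂ →ₗ[R] M₄) :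
    (f₁ - f₂).prodMap (g₁ - g₂) = f₁.prodMap g₁ - f₂.prodMap g₂ :=
  rfl

theorem Submodule.map_span_singleton_eq_bot {R M M₂ : Type*} [Semiring R] [AddCommMonoid M]
    [AddCommMonoid M₂] [Module R M] [Module R M₂] {f : M →ₗ[R] M₂} {v : M} (h : f v = 0) :
    (R ∙ v).map f = ⊥ := by
  rw [Submodule.map_span, Set.image_singleton, h, Submodule.span_singleton_eq_bot]

section wop

variable (c d : ℤ → ℂ) (m n : ℤ)

theorem wop_single (k : ℤ) (x : ℂ) :
    wop c m (Finsupp.single k x) = c k • Finsupp.single (m + k) x := by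
  rw [wop, Finsupp.lsum_single, LinearMap.smul_apply, Finsupp.lsingle_apply]

theorem wop_comp : (wop c m).comp (wop d n) = wop (fun k => d k * c (n + k)) (m + n) := by
  refine Finsupp.lhom_ext fun k x => ?_
  rw [LinearMap.comp_apply, wop_single, map_smul, wop_single, wop_single, smul_smul,
    mul_comm, add_assoc]

theorem wop_sub : wop c m - wop d m = wop (fun k => c k - d k) m := by
  refine Finsupp.lhom_ext fun k x => ?_
  rw [LinearMap.sub_apply, wop_single, wop_single, wop_single, sub_smul]

theorem wop_smul (a : ℂ) : a • wop c m = wop (fun k => a * c k) m := by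
  refine Finsupp.lhom_ext fun k x => ?_
  rw [LinearMap.smul_apply, wop_single, wop_single, smul_smul]

end wop

theorem oL_comp_sub_comp (m n : ℤ) :
    (oL m).comp (oL n) - (oL n).comp (oL m) = ((m : ℂ) - n) • oL (m + n) := by
  simp only [oL, LinearMap.prodMap_comp, ← LinearMap.prodMap_sub, ← LinearMap.prodMap_smul,
    wop_comp, add_comm n m, wop_sub, wop_smul]
  congr 1 <;> congr 1 <;> funext k <;> push_cast <;> ring

/-- The operators `L_m, H_m, G^±_m` descend to well-defined operators on the quotient
`(ℂ[t,t⁻¹] ⊕ ℂ[t,t⁻¹]‾)/ℂ·1` (they preserve `ℂ·1`), and on this quotient the `L_m`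
satisfy the Witt relation `[L_m, L_n] = (m - n) L_{m+n}`. -/
theorem stmt15 :
    (∀ m : ℤ, Kone.map (oL m) ≤ Kone) ∧
    (∀ m : ℤ, Kone.map (oH m) ≤ Kone) ∧
    (∀ m : ℤ, Kone.map (oGp m) ≤ Kone) ∧
    (∀ m : ℤ, Kone.map (oGm m) ≤ Kone) ∧
    (∀ m n : ℤ,
      (Kone.mkQ).comp ((oL m).comp (oL n) - (oL n).comp (oL m))
        = (Kone.mkQ).comp (((m : ℂ) - n) • oL (m + n))) := by
  have map_le {f : VV →ₗ[ℂ] VV} (hf : f (Finsupp.single 0 1, 0) = 0) : Kone.map f ≤ Kone :=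
    (Submodule.map_span_singleton_eq_bot hf).trans_le bot_le
  refine ⟨fun m => map_le ?_, fun m => map_le ?_, fun m => map_le ?_, fun m => map_le ?_,
    fun m n => by rw [oL_comp_sub_comp]⟩
  · simp [oL, wop_single]
  · simp [oH]
  · simp [oGp, wop_single]
  · simp [oGm]
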